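/- arXiv:2002.02633 — 7 statements merged into one kernel-verified Lean document; each statement's English description precedes it below -/
import Mathlib

section
/- Let P be a monic polynomial of degree n with positive distinct zeros x_1 < x_2 < ... < x_n and let p_k = Σ_{i=1}^n x_i^k (with p_0 = n). Then for every k ≥ 1, the largest zero x_n satisfies p_k/p_{k-1} < x_n < (p_k)^{1/k}. -/
open Finset

theorem sum_pow_succ_lt_mul_sum_pow {ι : Type*} {s : Finset ι} {x : ι → ℝ} {M : ℝ}
    (hpos : ∀ i ∈ s, 0 < x i) (hle : ∀ i ∈ s, x i ≤ M) (hlt : ∃ i ∈ s, x i < M) (k : ℕ) :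
    ∑ i ∈ s, x i ^ (k + 1) < M * ∑ i ∈ s, x i ^ k := by
  rw [mul_sum]
  refine sum_lt_sum (fun i hi => ?_) ?_
  · rw [pow_succ']
    exact mul_le_mul_of_nonneg_right (hle i hi) (pow_pos (hpos i hi) k).le
  · obtain ⟨i, hi, hxi⟩ := hlt
    refine ⟨i, hi, ?_⟩
    rw [pow_succ']
    exact mul_lt_mul_of_pos_right hxi (pow_pos (hpos i hi) k)

theorem euler_rayleigh_bounds (n : ℕ) (hn : 1 ≤ n) (x : Fin (n + 1) → ℝ)
    (hpos : ∀ i, 0 < x i) (hmono : StrictMono x)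
    (p : ℕ → ℝ) (hp : ∀ k, p k = ∑ i, x i ^ k) :
    ∀ k : ℕ, 1 ≤ k →
      p k / p (k - 1) < x (Fin.last n) ∧
      x (Fin.last n) < (p k) ^ ((k : ℝ)⁻¹) := by
  intro k hk
  obtain ⟨m, rfl⟩ := Nat.exists_eq_add_of_le' hn
  obtain ⟨j, rfl⟩ := Nat.exists_eq_add_of_le' hk
  have hp_pos : ∀ k, 0 < p k := fun k => by
    rw [hp]
    exact sum_pos (fun i _ => pow_pos (hpos i) k) univ_nonempty
  have hfirst : x 0 < x (Fin.last _) := hmono Fin.last_pos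
  constructor
  · rw [Nat.add_sub_cancel, div_lt_iff₀ (hp_pos j), hp, hp]
    exact sum_pow_succ_lt_mul_sum_pow (fun i _ => hpos i)
      (fun i _ => hmono.monotone (Fin.le_last i)) ⟨0, mem_univ _, hfirst⟩ j
  · rw [Real.lt_rpow_inv_iff_of_pos (hpos _).le (hp_pos _).le (by positivity),
      Real.rpow_natCast, hp]
    exact single_lt_sum Fin.last_pos.ne (mem_univ _) (mem_univ _)
      (pow_pos (hpos 0) _) fun i _ _ => (pow_pos (hpos i) _).le
end

section
/- Let P be a monic polynomial with positive distinct zeros x_1 < ... < x_n, n ≥ 2, and p_k = Σ x_i^k. Then the sequence ℓ_k = p_k/p_{k-1} is strictly increasing in k and converges to x_n, and the sequence u_k = (p_k)^{1/k} is strictly decreasing in k and converges to x_n. -/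
/-!
Write `M` for the largest zero. The sequence `ℓ` increases because of the Lagrange identity
`2 (p_k p_{k+2} - p_{k+1}²) = ∑_{i,j} x_i^k x_j^k (x_i - x_j)² > 0`. The sequence `u` decreases
because `M^m < p_m` and `p_{m+1} < M p_m` give `p_{m+1}^m < M^m p_m^m < p_m^{m+1}`.
For the limits, `p_k / M^k = ∑ (x_i / M)^k` tends to the (positive) number of zeros equal to `M`,
so both `ℓ_k` and `u_k` are `M` times a factor tending to `1`.
-/

open Filter Topology Finset

theorem rpow_inv_natCast_lt_rpow_inv_natCast_iff {a b : ℝ} (ha : 0 ≤ a) (hb : 0 ≤ b) {m n : ℕ}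
    (hm : m ≠ 0) (hn : n ≠ 0) : a ^ (m⁻¹ : ℝ) < b ^ (n⁻¹ : ℝ) ↔ a ^ n < b ^ m := by
  rw [← pow_lt_pow_iff_left₀ (by positivity) (by positivity) (mul_ne_zero hm hn),
    pow_mul, Real.rpow_inv_natCast_pow ha hm, mul_comm, pow_mul, Real.rpow_inv_natCast_pow hb hn]

variable {ι : Type*} [Fintype ι]

def powerSum (x : ι → ℝ) (k : ℕ) : ℝ := ∑ i, x i ^ k

namespace powerSum
variable {x : ι → ℝ}

theorem pos [Nonempty ι] (hx : ∀ i, 0 < x i) (k : ℕ) : 0 < powerSum x k :=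
  sum_pos (fun i _ => pow_pos (hx i) k) univ_nonempty

theorem two_mul_sub_sq_eq_sum (x : ι → ℝ) (k : ℕ) :
    2 * (powerSum x k * powerSum x (k + 2) - powerSum x (k + 1) ^ 2) =
      ∑ i, ∑ j, x i ^ k * x j ^ k * (x i - x j) ^ 2 := by
  calc _ = ∑ i, ∑ j, (x i ^ (k + 2) * x j ^ k + x i ^ k * x j ^ (k + 2)
          - 2 * (x i ^ (k + 1) * x j ^ (k + 1))) := by
        simp only [powerSum, sq, sum_add_distrib, sum_sub_distrib, ← mul_sum, ← sum_mul]
        ring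
    _ = _ := by
        refine sum_congr rfl fun i _ => sum_congr rfl fun j _ => ?_
        ring

theorem sq_lt_mul (hx : ∀ i, 0 < x i) {i j : ι} (hij : x i ≠ x j) (k : ℕ) :
    powerSum x (k + 1) ^ 2 < powerSum x k * powerSum x (k + 2) := by
  have hterm : ∀ a b, 0 ≤ x a ^ k * x b ^ k * (x a - x b) ^ 2 := fun a b => by
    have := hx a; have := hx b; positivity
  have hsum : 0 < ∑ a, ∑ b, x a ^ k * x b ^ k * (x a - x b) ^ 2 := by
    refine sum_pos' (fun a _ => sum_nonneg fun b _ => hterm a b) ⟨i, mem_univ i, ?_⟩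
    refine sum_pos' (fun b _ => hterm i b) ⟨j, mem_univ j, ?_⟩
    have := hx i; have := hx j; have := sub_ne_zero.2 hij
    positivity
  linarith [two_mul_sub_sq_eq_sum x k]

theorem succ_lt_mul (hx : ∀ i, 0 < x i) {i₀ j : ι} (hmax : ∀ i, x i ≤ x i₀) (hj : x j < x i₀)
    (k : ℕ) : powerSum x (k + 1) < x i₀ * powerSum x k := by
  rw [powerSum, powerSum, mul_sum]
  refine sum_lt_sum (fun i _ => ?_) ⟨j, mem_univ j, ?_⟩ <;> rw [pow_succ']
  · exact mul_le_mul_of_nonneg_right (hmax i) (pow_nonneg (hx i).le k)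
  · exact mul_lt_mul_of_pos_right hj (pow_pos (hx j) k)

theorem pow_lt (hx : ∀ i, 0 < x i) {i j : ι} (hij : j ≠ i) (k : ℕ) : x i ^ k < powerSum x k :=
  single_lt_sum hij (mem_univ i) (mem_univ j) (pow_pos (hx j) k)
    fun a _ _ => (pow_pos (hx a) k).le

theorem succ_pow_lt_pow_succ (hx : ∀ i, 0 < x i) {i₀ j : ι} (hmax : ∀ i, x i ≤ x i₀)
    (hj : x j < x i₀) {m : ℕ} (hm : m ≠ 0) :
    powerSum x (m + 1) ^ m < powerSum x m ^ (m + 1) := by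
  have : Nonempty ι := ⟨j⟩
  have hpos := pos hx
  calc powerSum x (m + 1) ^ m < (x i₀ * powerSum x m) ^ m :=
        pow_lt_pow_left₀ (succ_lt_mul hx hmax hj m) (hpos _).le hm
    _ = x i₀ ^ m * powerSum x m ^ m := mul_pow _ _ _
    _ < powerSum x m * powerSum x m ^ m :=
        mul_lt_mul_of_pos_right (pow_lt hx (ne_of_apply_ne x hj.ne) m) (pow_pos (hpos m) m)
    _ = powerSum x m ^ (m + 1) := (pow_succ' _ _).symm

theorem strictMono_succ_div (hx : ∀ i, 0 < x i) {i j : ι} (hij : x i ≠ x j) :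
    StrictMono fun k => powerSum x (k + 1) / powerSum x k := by
  have : Nonempty ι := ⟨i⟩
  refine strictMono_nat_of_lt_succ fun k => ?_
  rw [div_lt_div_iff₀ (pos hx k) (pos hx (k + 1))]
  linarith [sq_lt_mul hx hij k]

theorem strictAnti_rpow_inv (hx : ∀ i, 0 < x i) {i₀ j : ι} (hmax : ∀ i, x i ≤ x i₀)
    (hj : x j < x i₀) :
    StrictAnti fun k : ℕ => powerSum x (k + 1) ^ ((k : ℝ) + 1)⁻¹ := by
  have : Nonempty ι := ⟨j⟩
  refine strictAnti_nat_of_succ_lt fun k => ?_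
  have h := rpow_inv_natCast_lt_rpow_inv_natCast_iff (pos hx (k + 2)).le (pos hx (k + 1)).le
    (m := k + 1 + 1) (n := k + 1) (by omega) (by omega)
  push_cast at h ⊢
  exact h.2 (succ_pow_lt_pow_succ hx hmax hj (by omega))

theorem tendsto_div_pow (hx : ∀ i, 0 ≤ x i) {M : ℝ} (hM : 0 < M) (hmax : ∀ i, x i ≤ M) :
    Tendsto (fun k => powerSum x k / M ^ k) atTop (𝓝 #{i | x i = M}) := by
  have hterm : ∀ i, Tendsto (fun k => (x i / M) ^ k) atTop (𝓝 (if x i = M then 1 else 0)) := by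
    intro i
    by_cases h : x i = M
    · simp [h, hM.ne']
    · rw [if_neg h]
      exact tendsto_pow_atTop_nhds_zero_of_lt_one (div_nonneg (hx i) hM.le)
        ((div_lt_one hM).2 ((hmax i).lt_of_ne h))
  have hsum := tendsto_finsetSum univ fun i _ => hterm i
  rw [sum_boole] at hsum
  simpa only [powerSum, sum_div, div_pow] using hsum

theorem exists_tendsto_div_pow_ne_zero (hx : ∀ i, 0 < x i) {i₀ : ι} (hmax : ∀ i, x i ≤ x i₀) :
    ∃ c ≠ 0, Tendsto (fun k => powerSum x k / x i₀ ^ k) atTop (𝓝 c) :=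
  ⟨_, Nat.cast_ne_zero.2 (card_ne_zero_of_mem (a := i₀) (by simp)),
    tendsto_div_pow (fun i => (hx i).le) (hx i₀) hmax⟩

theorem tendsto_succ_div (hx : ∀ i, 0 < x i) {i₀ : ι} (hmax : ∀ i, x i ≤ x i₀) :
    Tendsto (fun k => powerSum x (k + 1) / powerSum x k) atTop (𝓝 (x i₀)) := by
  have : Nonempty ι := ⟨i₀⟩
  obtain ⟨c, hc, hs⟩ := exists_tendsto_div_pow_ne_zero hx hmax
  have h := ((hs.comp (tendsto_add_atTop_nat 1)).div hs hc).const_mul (x i₀)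
  rw [div_self hc, mul_one] at h
  refine h.congr fun k => ?_
  have := hx i₀; have := pos hx k
  simp only [Pi.div_apply, Function.comp_apply]
  field_simp
  ring

theorem tendsto_rpow_inv (hx : ∀ i, 0 < x i) {i₀ : ι} (hmax : ∀ i, x i ≤ x i₀) :
    Tendsto (fun k : ℕ => powerSum x (k + 1) ^ ((k : ℝ) + 1)⁻¹) atTop (𝓝 (x i₀)) := by
  have : Nonempty ι := ⟨i₀⟩
  obtain ⟨c, hc, hs⟩ := exists_tendsto_div_pow_ne_zero hx hmax
  have hexp : Tendsto (fun k : ℕ => ((k : ℝ) + 1)⁻¹) atTop (𝓝 0) := by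
    simpa only [one_div] using tendsto_one_div_add_atTop_nhds_zero_nat (𝕜 := ℝ)
  have h := ((hs.comp (tendsto_add_atTop_nat 1)).rpow hexp (Or.inl hc)).const_mul (x i₀)
  rw [Real.rpow_zero, mul_one] at h
  refine h.congr fun k => ?_
  have hk : (k : ℝ) + 1 = (k + 1 : ℕ) := by push_cast; rfl
  simp only [Function.comp_apply]
  rw [hk, Real.div_rpow (pos hx _).le (pow_pos (hx i₀) _).le,
    Real.pow_rpow_inv_natCast (hx i₀).le k.succ_ne_zero, mul_div_cancel₀ _ (hx i₀).ne']

end powerSum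

theorem euler_rayleigh_monotone (n : ℕ) (hn : 1 ≤ n) (x : Fin (n + 1) → ℝ)
    (hpos : ∀ i, 0 < x i) (hmono : StrictMono x)
    (p : ℕ → ℝ) (hp : ∀ k, p k = ∑ i, x i ^ k)
    (ℓ u : ℕ → ℝ) (hℓ : ∀ k, ℓ k = p (k + 1) / p k)
    (hu : ∀ k, u k = (p (k + 1)) ^ (((k : ℝ) + 1)⁻¹)) :
    StrictMono ℓ ∧ StrictAnti u ∧
    Filter.Tendsto ℓ Filter.atTop (nhds (x (Fin.last n))) ∧
    Filter.Tendsto u Filter.atTop (nhds (x (Fin.last n))) := by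
  obtain rfl : p = powerSum x := funext hp
  obtain rfl : ℓ = fun k => powerSum x (k + 1) / powerSum x k := funext hℓ
  obtain rfl : u = fun k : ℕ => powerSum x (k + 1) ^ ((k : ℝ) + 1)⁻¹ := funext hu
  have hmax : ∀ i, x i ≤ x (Fin.last n) := fun i => hmono.monotone (Fin.le_last i)
  have : NeZero n := ⟨by omega⟩
  have hlt : x 0 < x (Fin.last n) := hmono Fin.last_pos'
  exact ⟨powerSum.strictMono_succ_div hpos hlt.ne, powerSum.strictAnti_rpow_inv hpos hmax hlt,
    powerSum.tendsto_succ_div hpos hmax, powerSum.tendsto_rpow_inv hpos hmax⟩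
end

section
/- For all real a > 0 and b with 0 < b ≤ 4a + 4, and all real t ≥ 4(a+b+3), the quadratic s_2(a,b;t) = 4t² + (2a² + 6ab − b² − 2a + 2b) t + a(a+b)(a+b+1)(4a − b + 4) is strictly positive. -/
/-! Split `s₂ = t · (4t + L) + C` with `L` the linear coefficient and `C` the constant term.
Every factor of `C` is nonnegative, and `4t + L > 0` because `4t ≥ 16(a + b + 3)` while
`b² ≤ (4a + 4) b` absorbs the only negative term `-b²`. -/

lemma constant_term_nonneg {a b : ℝ} (ha : 0 < a) (hb : 0 < b) (hb' : b ≤ 4*a + 4) :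
    0 ≤ a * (a + b) * (a + b + 1) * (4*a - b + 4) := by
  have : 0 ≤ 4*a - b + 4 := by linarith
  positivity

lemma four_mul_add_linear_coeff_pos {a b t : ℝ} (ha : 0 < a) (hb : 0 < b)
    (hb' : b ≤ 4*a + 4) (ht : 4*(a + b + 3) ≤ t) :
    0 < 4*t + (2*a^2 + 6*a*b - b^2 - 2*a + 2*b) := by
  have hb_sq : b^2 ≤ (4*a + 4) * b := by nlinarith
  nlinarith [mul_pos ha hb]

theorem s2_pos_of_b_le (a b t : ℝ) (ha : 0 < a) (hb : 0 < b) (hb' : b ≤ 4*a + 4)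
    (ht : 4*(a + b + 3) ≤ t) :
    0 < 4*t^2 + (2*a^2 + 6*a*b - b^2 - 2*a + 2*b) * t
      + a * (a + b) * (a + b + 1) * (4*a - b + 4) := by
  have ht_pos : 0 < t := by linarith
  calc 0 < t * (4*t + (2*a^2 + 6*a*b - b^2 - 2*a + 2*b))
          + a * (a + b) * (a + b + 1) * (4*a - b + 4) :=
        add_pos_of_pos_of_nonneg
          (mul_pos ht_pos (four_mul_add_linear_coeff_pos ha hb hb' ht))
          (constant_term_nonneg ha hb hb')
    _ = _ := by ring
end

section
/- For all real a, b > 0 and all real t ≥ 2(a+b)(a+b+1), the quadratic s_2(a,b;t) = 4t² + (2a² + 6ab − b² − 2a + 2b) t + a(a+b)(a+b+1)(4a − b + 4) is strictly positive. -/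
/-! Write `s = a + b` and `T = 2 s (s + 1)`. At `t = T` the quadratic factors as
`s (s + 1) (24a² + 43ab + 14b² + 16s + 4b)`, and its slope `8T + (2a² + 6ab − b² − 2a + 2b)`
equals `18a² + 38ab + 15b² + 14a + 18b`; both have only positive terms, and an upward parabola
with nonnegative slope at `T` does not decrease to the right of `T`. -/

theorem quadratic_le_quadratic_of_le {α β γ T t : ℝ} (hα : 0 ≤ α) (hslope : 0 ≤ 2 * α * T + β)
    (hTt : T ≤ t) : α * T ^ 2 + β * T + γ ≤ α * t ^ 2 + β * t + γ := by
  have hdiff : α * t ^ 2 + β * t + γ - (α * T ^ 2 + β * T + γ)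
      = (t - T) * (α * (t - T) + (2 * α * T + β)) := by ring
  have hd : 0 ≤ t - T := sub_nonneg.2 hTt
  linarith [mul_nonneg hd (add_nonneg (mul_nonneg hα hd) hslope)]

theorem s2_pos_of_t_ge (a b t : ℝ) (ha : 0 < a) (hb : 0 < b)
    (ht : 2*(a + b)*(a + b + 1) ≤ t) :
    0 < 4*t^2 + (2*a^2 + 6*a*b - b^2 - 2*a + 2*b) * t
      + a * (a + b) * (a + b + 1) * (4*a - b + 4) := by
  set T := 2 * (a + b) * (a + b + 1) with hT
  have hslope : 0 ≤ 2 * 4 * T + (2*a^2 + 6*a*b - b^2 - 2*a + 2*b) := by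
    have : 2 * 4 * T + (2*a^2 + 6*a*b - b^2 - 2*a + 2*b)
        = 18*a^2 + 38*a*b + 15*b^2 + 14*a + 18*b := by rw [hT]; ring
    rw [this]; positivity
  have hbase : 0 < 4*T^2 + (2*a^2 + 6*a*b - b^2 - 2*a + 2*b) * T
      + a * (a + b) * (a + b + 1) * (4*a - b + 4) := by
    have : 4*T^2 + (2*a^2 + 6*a*b - b^2 - 2*a + 2*b) * T
        + a * (a + b) * (a + b + 1) * (4*a - b + 4)
        = (a + b) * (a + b + 1) * (24*a^2 + 43*a*b + 14*b^2 + 16*(a + b) + 4*b) := by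
      rw [hT]; ring
    rw [this]; positivity
  exact hbase.trans_le (quadratic_le_quadratic_of_le (by norm_num) hslope ht)
end

section
/- Let f be a real polynomial of degree n ≥ 3 with only real and distinct zeros, and let x_0 be a zero of f. Then 3(n−2) f''(x_0)² − 4(n−1) f'(x_0) f'''(x_0) ≥ 0. -/
/-!
Write `f = (X - x₀) g`. Then `f'(x₀) = g(x₀)`, `f''(x₀) = 2 g'(x₀)` and `f'''(x₀) = 3 g''(x₀)`, so
the claim is twelve times Laguerre's inequality `(m - 1) g'² - m g g'' ≥ 0` for the real-rooted
polynomial `g` of degree `m = n - 1`. Writing it as `g'² ≤ m (g'² - g g'')`, it holds for constants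
(`m = 0`) and linear factors (`m = 1`), and it is stable under products: the form
`Δ p = p'² - p p''` satisfies `Δ (p q) = q² Δ p + p² Δ q`, and Cauchy–Schwarz combines the two
inequalities for `(p q)' = p' q + p q'`.
-/

open Polynomial

lemma sq_add_le_mul_add_of_sq_le_mul {K : Type*} [CommRing K] [LinearOrder K] [IsStrictOrderedRing K]
    {a b m k A B : K} (hm : 0 ≤ m) (hk : 0 ≤ k) (hA : 0 ≤ A) (hB : 0 ≤ B)
    (ha : a ^ 2 ≤ m * A) (hb : b ^ 2 ≤ k * B) : (a + b) ^ 2 ≤ (m + k) * (A + B) := by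
  have hab : 2 * (a * b) ≤ k * A + m * B := by
    refine (abs_le_of_sq_le_sq' ?_ (by positivity)).2
    calc (2 * (a * b)) ^ 2 = 4 * (a ^ 2 * b ^ 2) := by ring
      _ ≤ 4 * ((m * A) * (k * B)) := by gcongr
      _ ≤ (k * A + m * B) ^ 2 := by nlinarith [sq_nonneg (k * A - m * B)]
  nlinarith

namespace Polynomial

section CommRing

variable {R : Type*} [CommRing R]

/-- `p'² - p p''`, which is `-p²` times the derivative of the logarithmic derivative `p'/p`. -/
noncomputable def laguerreForm (p : R[X]) : R[X] :=
  derivative p ^ 2 - p * derivative (derivative p)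

theorem laguerreForm_mul (p q : R[X]) :
    laguerreForm (p * q) = q ^ 2 * laguerreForm p + p ^ 2 * laguerreForm q := by
  simp only [laguerreForm, derivative_mul, derivative_add]
  ring

@[simp] theorem laguerreForm_C (c : R) : laguerreForm (C c) = 0 := by
  simp [laguerreForm]

@[simp] theorem laguerreForm_X_sub_C (a : R) : laguerreForm (X - C a) = 1 := by
  simp [laguerreForm]

end CommRing

section Ordered

variable {R : Type*} [CommRing R] [LinearOrder R]

/-- For `m = p.natDegree` this is Laguerre's inequality `(m - 1) p'(x)² - m p(x) p''(x) ≥ 0`;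
the nonnegativity of `laguerreForm` is carried along so that the property is stable under
products. -/
def LaguerreAt (m : R) (p : R[X]) (x : R) : Prop :=
  0 ≤ (laguerreForm p).eval x ∧ (derivative p).eval x ^ 2 ≤ m * (laguerreForm p).eval x

theorem laguerreAt_C (c x : R) : LaguerreAt 0 (C c) x := by
  simp [LaguerreAt]

variable [IsStrictOrderedRing R]

theorem laguerreAt_X_sub_C (a x : R) : LaguerreAt 1 (X - C a) x := by
  simp [LaguerreAt]

theorem LaguerreAt.mul {m k x : R} {p q : R[X]} (hm : 0 ≤ m) (hk : 0 ≤ k)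
    (hp : LaguerreAt m p x) (hq : LaguerreAt k q x) : LaguerreAt (m + k) (p * q) x := by
  obtain ⟨hp₀, hp₁⟩ := hp
  obtain ⟨hq₀, hq₁⟩ := hq
  have hA : 0 ≤ q.eval x ^ 2 * (laguerreForm p).eval x := by positivity
  have hB : 0 ≤ p.eval x ^ 2 * (laguerreForm q).eval x := by positivity
  simp only [LaguerreAt, laguerreForm_mul, derivative_mul, eval_add, eval_mul, eval_pow]
  refine ⟨add_nonneg hA hB, sq_add_le_mul_add_of_sq_le_mul hm hk hA hB ?_ ?_⟩
  · nlinarith [mul_le_mul_of_nonneg_left hp₁ (sq_nonneg (q.eval x))]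
  · nlinarith [mul_le_mul_of_nonneg_left hq₁ (sq_nonneg (p.eval x))]

theorem laguerreAt_multiset_prod_X_sub_C (s : Multiset R) (x : R) :
    LaguerreAt (s.card : R) (s.map (X - C ·)).prod x := by
  induction s using Multiset.induction with
  | empty => simpa using laguerreAt_C 1 x
  | cons a s ih =>
    simpa [add_comm] using (laguerreAt_X_sub_C a x).mul zero_le_one s.card.cast_nonneg ih

theorem Splits.laguerreAt {p : R[X]} (hp : p.Splits) (x : R) :
    LaguerreAt (p.natDegree : R) p x := by
  have := (laguerreAt_C p.leadingCoeff x).mul le_rfl (Nat.cast_nonneg _)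
    (laguerreAt_multiset_prod_X_sub_C p.roots x)
  rwa [zero_add, ← hp.eq_prod_roots, ← hp.natDegree_eq_card_roots] at this

end Ordered

section Root

variable {R : Type*} [CommRing R]

theorem iterate_derivative_X_sub_C_mul (a : R) (g : R[X]) (k : ℕ) :
    derivative^[k + 1] ((X - C a) * g) =
      (X - C a) * derivative^[k + 1] g + (k + 1 : R[X]) * derivative^[k] g := by
  induction k with
  | zero => simp [derivative_mul, add_comm]
  | succ k ih =>
    rw [Function.iterate_succ_apply', ih, Function.iterate_succ_apply' _ (k + 1),
      Function.iterate_succ_apply' _ k]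
    simp only [derivative_add, derivative_mul, derivative_sub, derivative_X, derivative_C,
      derivative_natCast, derivative_one]
    push_cast
    ring

theorem eval_iterate_derivative_X_sub_C_mul (a : R) (g : R[X]) (k : ℕ) :
    (derivative^[k + 1] ((X - C a) * g)).eval a = (k + 1) * (derivative^[k] g).eval a := by
  simp [iterate_derivative_X_sub_C_mul]

end Root

end Polynomial

open Polynomial in
theorem laguerre_inequality_general (n : ℕ) (f : Polynomial ℝ)
    (hdeg : f.natDegree = n) (hroots : f.roots.card = n)
    (x₀ : ℝ) (hx₀ : f.eval x₀ = 0) :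
    0 ≤ 3 * ((n : ℝ) - 2) * (derivative (derivative f)).eval x₀ ^ 2
      - 4 * ((n : ℝ) - 1) * (derivative f).eval x₀ *
        (derivative (derivative (derivative f))).eval x₀ := by
  rcases eq_or_ne f 0 with rfl | hf0
  · simp
  set g := f /ₘ (X - C x₀)
  have hfg : (X - C x₀) * g = f := mul_divByMonic_eq_iff_isRoot.mpr hx₀
  have hg0 : g ≠ 0 := right_ne_zero_of_mul (hfg ▸ hf0)
  have hn : n = g.natDegree + 1 := by
    rw [← hdeg, ← hfg, natDegree_mul (X_sub_C_ne_zero x₀) hg0, natDegree_X_sub_C, add_comm]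
  have hg : g.Splits :=
    (splits_iff_card_roots.mpr (hroots.trans hdeg.symm)).of_dvd hf0 (Dvd.intro_left _ hfg)
  have hd₁ := eval_iterate_derivative_X_sub_C_mul x₀ g 0
  have hd₂ := eval_iterate_derivative_X_sub_C_mul x₀ g 1
  have hd₃ := eval_iterate_derivative_X_sub_C_mul x₀ g 2
  simp only [hfg, Function.iterate_succ, Function.iterate_zero, Function.comp_apply,
    id_eq] at hd₁ hd₂ hd₃
  rw [hd₁, hd₂, hd₃, hn]
  have hlag := (hg.laguerreAt x₀).2
  simp only [laguerreForm, eval_sub, eval_mul, eval_pow] at hlag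
  push_cast
  linear_combination 12 * hlag

open Polynomial in
theorem laguerre_inequality (n : ℕ) (hn : 3 ≤ n) (f : Polynomial ℝ)
    (hdeg : f.natDegree = n) (hroots : f.roots.card = n) (hdist : f.roots.Nodup)
    (x₀ : ℝ) (hx₀ : f.eval x₀ = 0) :
    0 ≤ 3 * ((n : ℝ) - 2) * (derivative (derivative f)).eval x₀ ^ 2
      - 4 * ((n : ℝ) - 1) * (derivative f).eval x₀ *
        (derivative (derivative (derivative f))).eval x₀ :=
  laguerre_inequality_general n f hdeg hroots x₀ hx₀
end

section
/- For every n ≥ 2 and λ > −1/2, the largest zero x_{nn}(λ) of the Gegenbauer polynomial P_n^{(λ)} satisfies 1 − x_{nn}(λ)² > (2λ+1)(2λ+9) / [ 4n(n+2λ) + (2λ+1)(2λ+5) ]. -/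
open Finset in
/-- The Jacobi polynomial `P_n^{(α,β)}`, via the hypergeometric representation. -/
noncomputable def jacobiP (n : ℕ) (α β : ℝ) (x : ℝ) : ℝ :=
  (n.factorial : ℝ)⁻¹ * ∑ k ∈ range (n + 1),
    (n.choose k : ℝ) * (ascPochhammer ℝ k).eval ((n : ℝ) + α + β + 1)
      * (ascPochhammer ℝ (n - k)).eval (α + k + 1) * ((x - 1) / 2) ^ k

/-- The Gegenbauer (ultraspherical) polynomial `P_n^{(λ)}`, up to a positive constant
factor: it is a constant multiple of the Jacobi polynomial `P_n^{(α,α)}`, `α = λ - 1/2`,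
so it has the same zeros. -/
noncomputable def gegenbauerP (n : ℕ) (lam : ℝ) (x : ℝ) : ℝ :=
  jacobiP n (lam - 1 / 2) (lam - 1 / 2) x

/-!
Write `u = 2λ + 1`, `N = n(n + 2λ)` and `L v = (1 - t²) v'' - u t v' + N v`, so that `L p = 0`
for `p = P_n^{(λ)}`. Right of its largest zero `x`, `p` is positive, so `p'(x) ≥ 0`. If `L v < 0`
on `(x, 1)`, the weighted Wronskian `(1 - t²)^(u/2) (p' v - v' p)` has derivative
`-(1 - t²)^(u/2 - 1) p L v > 0` there and vanishes at `1`; hence it is negative at `x`, that is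
`p'(x) v(x) < 0`, and so `v(x) < 0`. The same argument on `(0, 1)` with `v = -t` rules out
`x ≤ 0`. Then `v(t) = t^m ((4N + u(u + 4)) t² - 4(N - u))` with `m = (2N - 3u - 8)/(u + 8)`
gives `(4N + u(u + 4)) x² < 4(N - u)`, which is the bound.
-/

section Jacobi

open Finset Polynomial

theorem eval_hypergeometric_ode {a : ℕ → ℝ} {n : ℕ} {A B : ℝ} {Q : ℝ[X]}
    (hQ : Q = ∑ k ∈ range (n + 1), C (a k) * X ^ k)
    (hrec : ∀ k < n, a (k + 1) * ((k + 1) * (k + A)) = a k * ((n - k) * (n + k + B - 1)))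
    (y : ℝ) :
    y * (1 + y) * (derivative (derivative Q)).eval y + (A + B * y) * (derivative Q).eval y
      = n * (n + B - 1) * Q.eval y := by
  have hterm : ∀ k : ℕ, y * (1 + y) * (a k * k * (k - 1 : ℕ) * y ^ (k - 1 - 1))
      + (A + B * y) * (a k * k * y ^ (k - 1)) - n * (n + B - 1) * (a k * y ^ k)
      = a k * k * (k + A - 1) * y ^ (k - 1) - a k * ((n - k) * (n + k + B - 1)) * y ^ k := by
    rintro (_ | _ | k) <;>
      simp only [Nat.zero_sub, Nat.add_sub_cancel, pow_succ, pow_zero] <;> push_cast <;> ring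
  subst hQ
  simp only [derivative_sum, derivative_C_mul_X_pow, eval_finsetSum, eval_C, eval_mul,
    eval_pow, eval_X, mul_sum]
  rw [← sub_eq_zero, ← sum_add_distrib, ← sum_sub_distrib, sum_congr rfl fun k _ => hterm k,
    sum_sub_distrib, sum_range_succ', sum_range_succ, sub_eq_zero]
  simp only [CharP.cast_eq_zero, mul_zero, zero_mul, add_zero, sub_self, Nat.cast_add,
    Nat.cast_one]
  refine sum_congr rfl fun k hk => ?_
  rw [Nat.add_sub_cancel, ← hrec k (mem_range.1 hk)]
  ring

lemma hasDerivAt_eval_sub_one_div_two (Q : ℝ[X]) (x : ℝ) :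
    HasDerivAt (fun x => Q.eval ((x - 1) / 2)) ((derivative Q).eval ((x - 1) / 2) / 2) x :=
  ((Q.hasDerivAt _).comp x (((hasDerivAt_id' x).sub_const 1).div_const 2)).congr_deriv (by ring)

noncomputable def jacobiCoeff (n : ℕ) (α β : ℝ) (k : ℕ) : ℝ :=
  (n.factorial : ℝ)⁻¹ * ((n.choose k : ℝ) * (ascPochhammer ℝ k).eval ((n : ℝ) + α + β + 1)
    * (ascPochhammer ℝ (n - k)).eval (α + k + 1))

noncomputable def jacobiPoly (n : ℕ) (α β : ℝ) : ℝ[X] :=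
  ∑ k ∈ range (n + 1), C (jacobiCoeff n α β k) * X ^ k

lemma jacobiP_eq_eval (n : ℕ) (α β x : ℝ) :
    jacobiP n α β x = (jacobiPoly n α β).eval ((x - 1) / 2) := by
  simp only [jacobiP, jacobiPoly, jacobiCoeff, eval_finsetSum, eval_mul, eval_C, eval_pow,
    eval_X, mul_sum]
  exact sum_congr rfl fun k _ => by ring

lemma jacobiCoeff_succ_mul {n k : ℕ} (hk : k < n) (α β : ℝ) :
    jacobiCoeff n α β (k + 1) * ((k + 1) * (k + α + 1))
      = jacobiCoeff n α β k * ((n - k) * (n + k + α + β + 1)) := by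
  have hchoose : (n.choose (k + 1) : ℝ) * (k + 1) = n.choose k * (n - k) := by
    have h := congrArg (Nat.cast : ℕ → ℝ) (Nat.choose_succ_right_eq n k)
    push_cast [Nat.cast_sub hk.le] at h
    exact h
  have hsub : n - k = n - (k + 1) + 1 := by omega
  have hleft : (ascPochhammer ℝ (n - (k + 1) + 1)).eval (α + k + 1)
      = (α + k + 1) * (ascPochhammer ℝ (n - (k + 1))).eval (α + (k + 1 : ℕ) + 1) := by
    rw [ascPochhammer_succ_left, eval_mul, eval_X, eval_comp, eval_add, eval_X, eval_one]
    push_cast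
    ring_nf
  unfold jacobiCoeff
  rw [ascPochhammer_succ_eval, hsub, hleft]
  linear_combination (n.factorial : ℝ)⁻¹ * (ascPochhammer ℝ k).eval ((n : ℝ) + α + β + 1)
    * (ascPochhammer ℝ (n - (k + 1))).eval (α + (k + 1 : ℕ) + 1) * (k + α + 1)
    * (n + k + α + β + 1) * hchoose

lemma jacobiCoeff_pos {n k : ℕ} (hk : k ≤ n) {α β : ℝ} (hα : -1 < α)
    (hαβ : 0 < n + α + β + 1) : 0 < jacobiCoeff n α β k := by
  have hk' : (0 : ℝ) < α + k + 1 := by linarith [(k.cast_nonneg : (0 : ℝ) ≤ k)]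
  unfold jacobiCoeff
  have := Nat.choose_pos hk
  have := n.factorial_pos
  have := ascPochhammer_pos k _ hαβ
  have := ascPochhammer_pos (n - k) _ hk'
  positivity

variable (n : ℕ) (α β : ℝ)

lemma hasDerivAt_jacobiP (x : ℝ) :
    HasDerivAt (jacobiP n α β) ((derivative (jacobiPoly n α β)).eval ((x - 1) / 2) / 2) x := by
  simpa only [← jacobiP_eq_eval] using hasDerivAt_eval_sub_one_div_two (jacobiPoly n α β) x

lemma deriv_jacobiP :
    deriv (jacobiP n α β) = fun x => (derivative (jacobiPoly n α β)).eval ((x - 1) / 2) / 2 :=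
  funext fun x => (hasDerivAt_jacobiP n α β x).deriv

lemma hasDerivAt_deriv_jacobiP (x : ℝ) :
    HasDerivAt (deriv (jacobiP n α β))
      ((derivative (derivative (jacobiPoly n α β))).eval ((x - 1) / 2) / 4) x := by
  rw [deriv_jacobiP]
  exact ((hasDerivAt_eval_sub_one_div_two _ x).div_const 2).congr_deriv (by ring)

theorem jacobiP_ode (x : ℝ) :
    (1 - x ^ 2) * deriv (deriv (jacobiP n α β)) x
      + (β - α - (α + β + 2) * x) * deriv (jacobiP n α β) x
      + n * (n + α + β + 1) * jacobiP n α β x = 0 := by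
  have hode := eval_hypergeometric_ode (Q := jacobiPoly n α β) (A := α + 1) (B := α + β + 2)
    rfl (fun k hk => by linear_combination jacobiCoeff_succ_mul hk α β) ((x - 1) / 2)
  rw [(hasDerivAt_deriv_jacobiP n α β x).deriv, deriv_jacobiP, jacobiP_eq_eval]
  linear_combination -hode

lemma differentiable_jacobiP : Differentiable ℝ (jacobiP n α β) :=
  fun x => (hasDerivAt_jacobiP n α β x).differentiableAt

lemma differentiable_deriv_jacobiP : Differentiable ℝ (deriv (jacobiP n α β)) :=
  fun x => (hasDerivAt_deriv_jacobiP n α β x).differentiableAt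

variable {n α β}

lemma jacobiP_pos_of_one_le (hα : -1 < α) (hαβ : 0 < n + α + β + 1) {x : ℝ} (hx : 1 ≤ x) :
    0 < jacobiP n α β x := by
  rw [jacobiP_eq_eval, jacobiPoly, eval_finsetSum]
  refine sum_pos' (fun k hk => ?_)
    ⟨0, by simp, by simpa using jacobiCoeff_pos n.zero_le hα hαβ⟩
  simp only [eval_mul, eval_C, eval_pow, eval_X]
  have := jacobiCoeff_pos (Nat.lt_succ_iff.1 (mem_range.1 hk)) hα hαβ
  have : 0 ≤ (x - 1) / 2 := by linarith
  positivity

end Jacobi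

lemma gegenbauerP_ode (n : ℕ) (lam x : ℝ) :
    (1 - x ^ 2) * deriv (deriv (gegenbauerP n lam)) x
      - (2 * lam + 1) * x * deriv (gegenbauerP n lam) x
      + n * (n + 2 * lam) * gegenbauerP n lam x = 0 := by
  have h : gegenbauerP n lam = jacobiP n (lam - 1 / 2) (lam - 1 / 2) := rfl
  rw [h]
  linear_combination jacobiP_ode n (lam - 1 / 2) (lam - 1 / 2) x

open Set

lemma pos_of_forall_zero_le {f : ℝ → ℝ} (hf : Continuous f) {x b t : ℝ} (hb : 0 < f b)
    (hzero : ∀ y, f y = 0 → y ≤ x) (hxt : x < t) (htb : t ≤ b) : 0 < f t := by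
  by_contra! ht
  obtain ⟨y, hy, hfy⟩ := intermediate_value_Icc htb hf.continuousOn ⟨ht, hb.le⟩
  linarith [hzero y hfy, hy.1]

lemma HasDerivAt.nonneg_of_eq_zero_of_pos_right {f : ℝ → ℝ} {f' x b : ℝ}
    (hf : HasDerivAt f f' x) (hx : f x = 0) (hxb : x < b) (hpos : ∀ t ∈ Ioo x b, 0 < f t) :
    0 ≤ f' := by
  refine ge_of_tendsto (hf.tendsto_slope.mono_left (nhdsGT_le_nhdsNE x)) ?_
  filter_upwards [Ioo_mem_nhdsGT hxb] with t ht
  rw [slope_def_field, hx, sub_zero]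
  exact div_nonneg (hpos t ht).le (sub_nonneg.2 ht.1.le)

section Comparison

variable {u N : ℝ} {p p' p'' v v' v'' : ℝ → ℝ}

lemma hasDerivAt_weighted_wronskian {t : ℝ} (ht : t ^ 2 < 1)
    (hp : HasDerivAt p (p' t) t) (hp' : HasDerivAt p' (p'' t) t)
    (hv : HasDerivAt v (v' t) t) (hv' : HasDerivAt v' (v'' t) t)
    (hode : (1 - t ^ 2) * p'' t - u * t * p' t + N * p t = 0) :
    HasDerivAt (fun s => (1 - s ^ 2) ^ (u / 2) * (p' s * v s - v' s * p s))
      (-(1 - t ^ 2) ^ (u / 2 - 1) * p t * ((1 - t ^ 2) * v'' t - u * t * v' t + N * v t)) t := by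
  have h1t : 0 < 1 - t ^ 2 := by linarith
  have hw := (((hasDerivAt_pow 2 t).const_sub 1).rpow_const (p := u / 2) (Or.inl h1t.ne'))
  refine (hw.mul ((hp'.fun_mul hv).fun_sub (hv'.fun_mul hp))).congr_deriv ?_
  have hsplit : (1 - t ^ 2) ^ (u / 2) = (1 - t ^ 2) * (1 - t ^ 2) ^ (u / 2 - 1) := by
    have := Real.rpow_add h1t 1 (u / 2 - 1)
    rwa [Real.rpow_one, add_sub_cancel] at this
  rw [hsplit]
  linear_combination (1 - t ^ 2) ^ (u / 2 - 1) * v t * hode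

theorem wronskian_neg_of_supersolution (hu : 0 < u) {a : ℝ} (ha : -1 < a) (ha1 : a < 1)
    (hp : ∀ t ∈ Icc a 1, HasDerivAt p (p' t) t)
    (hp' : ∀ t ∈ Icc a 1, HasDerivAt p' (p'' t) t)
    (hv : ∀ t ∈ Icc a 1, HasDerivAt v (v' t) t)
    (hv' : ∀ t ∈ Icc a 1, HasDerivAt v' (v'' t) t)
    (hode : ∀ t ∈ Ioo a 1, (1 - t ^ 2) * p'' t - u * t * p' t + N * p t = 0)
    (hsuper : ∀ t ∈ Ioo a 1, (1 - t ^ 2) * v'' t - u * t * v' t + N * v t < 0)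
    (hpos : ∀ t ∈ Ioo a 1, 0 < p t) :
    p' a * v a - v' a * p a < 0 := by
  set W := fun s => (1 - s ^ 2) ^ (u / 2) * (p' s * v s - v' s * p s)
  have hsq : ∀ t ∈ Ioo a 1, t ^ 2 < 1 := fun t ht => by nlinarith [ht.1, ht.2]
  have hcont : ContinuousOn W (Icc a 1) := by
    refine ((continuous_const.sub (continuous_pow 2)).rpow_const fun _ => Or.inr (by positivity))
      |>.continuousOn.mul (ContinuousOn.sub ?_ ?_)
    · exact fun t ht => ((hp' t ht).continuousAt.mul (hv t ht).continuousAt).continuousWithinAt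
    · exact fun t ht => ((hv' t ht).continuousAt.mul (hp t ht).continuousAt).continuousWithinAt
  have hmono : StrictMonoOn W (Icc a 1) := by
    refine strictMonoOn_of_deriv_pos (convex_Icc a 1) hcont fun t ht => ?_
    rw [interior_Icc] at ht
    have hIcc := Ioo_subset_Icc_self ht
    rw [(hasDerivAt_weighted_wronskian (hsq t ht) (hp t hIcc) (hp' t hIcc) (hv t hIcc)
      (hv' t hIcc) (hode t ht)).deriv]
    have := Real.rpow_pos_of_pos (sub_pos.2 (hsq t ht)) (u / 2 - 1)
    have := mul_pos (mul_pos this (hpos t ht)) (neg_pos.2 (hsuper t ht))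
    linarith
  have hW1 : W 1 = 0 := by simp [W, Real.zero_rpow (by positivity : u / 2 ≠ 0)]
  have hWa : W a < 0 := hW1 ▸ hmono (left_mem_Icc.2 ha1.le) (right_mem_Icc.2 ha1.le) ha1
  exact neg_of_mul_neg_right hWa (Real.rpow_nonneg (by nlinarith) _)

end Comparison

section ComparisonFunction

variable (a b m : ℝ)

noncomputable def comparisonFn (t : ℝ) : ℝ := a * t ^ (m + 2) - b * t ^ m

noncomputable def comparisonFn' (t : ℝ) : ℝ := a * (m + 2) * t ^ (m + 1) - b * m * t ^ (m - 1)

noncomputable def comparisonFn'' (t : ℝ) : ℝ :=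
  a * (m + 2) * (m + 1) * t ^ m - b * m * (m - 1) * t ^ (m - 2)

lemma hasDerivAt_const_mul_rpow (c r : ℝ) {t : ℝ} (ht : 0 < t) :
    HasDerivAt (fun t => c * t ^ r) (c * r * t ^ (r - 1)) t := by
  simpa only [mul_assoc] using (Real.hasDerivAt_rpow_const (p := r) (Or.inl ht.ne')).const_mul c

variable {t : ℝ}

lemma hasDerivAt_comparisonFn (ht : 0 < t) :
    HasDerivAt (comparisonFn a b m) (comparisonFn' a b m t) t := by
  have h := (hasDerivAt_const_mul_rpow a (m + 2) ht).sub (hasDerivAt_const_mul_rpow b m ht)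
  rwa [show m + 2 - 1 = m + 1 by ring] at h

lemma hasDerivAt_comparisonFn' (ht : 0 < t) :
    HasDerivAt (comparisonFn' a b m) (comparisonFn'' a b m t) t := by
  have h := (hasDerivAt_const_mul_rpow (a * (m + 2)) (m + 1) ht).sub
    (hasDerivAt_const_mul_rpow (b * m) (m - 1) ht)
  rwa [show m + 1 - 1 = m by ring, show m - 1 - 1 = m - 2 by ring] at h

end ComparisonFunction

lemma comparisonFn_supersolution {u N a b m t : ℝ} (hu : 0 < u) (hNu : u < N)
    (ha : a = 4 * N + u * (u + 4)) (hb : b = 4 * (N - u)) (hm : m = (2 * N - 3 * u - 8) / (u + 8))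
    (ht0 : 0 < t) (ht1 : t < 1) (he : b ≤ a * t ^ 2) :
    (1 - t ^ 2) * comparisonFn'' a b m t - u * t * comparisonFn' a b m t
      + N * comparisonFn a b m t < 0 := by
  have hpow : ∀ (r : ℝ) (k : ℕ), r = m - 2 + k → t ^ r = t ^ (m - 2) * t ^ k :=
    fun r k hr => by rw [hr, Real.rpow_add ht0, Real.rpow_natCast]
  -- Up to a negative factor, the bracket is the Bernstein form on `[0, u(u + 8)/a]` of the
  -- quadratic `t^(2-m) L v` in `s = 1 - t²`; the choice of `m` makes all three of its
  -- Bernstein coefficients negative.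
  have key : u * (u + 8) ^ 2 * ((1 - t ^ 2) * comparisonFn'' a b m t
      - u * t * comparisonFn' a b m t + N * comparisonFn a b m t)
      = -(N - u) * t ^ (m - 2) * (u * (a * t ^ 2 - b) ^ 2
        + 2 * (u + 8) * (3 * u + 4) * (1 - t ^ 2) * (a * t ^ 2 - b)
        + 8 * (u + 8) * a * (1 - t ^ 2) ^ 2) := by
    simp only [comparisonFn, comparisonFn', comparisonFn'']
    rw [hpow (m + 2) 4 (by push_cast; ring), hpow (m + 1) 3 (by push_cast; ring),
      hpow m 2 (by push_cast; ring), hpow (m - 1) 1 (by push_cast; ring), ha, hb, hm]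
    field_simp
    ring
  have he' : 0 ≤ a * t ^ 2 - b := sub_nonneg.2 he
  have h1t : 0 < 1 - t ^ 2 := by nlinarith
  have ha' : 0 < a := by
    have := hu.trans hNu
    rw [ha]
    positivity
  have hbracket : 0 < u * (a * t ^ 2 - b) ^ 2
      + 2 * (u + 8) * (3 * u + 4) * (1 - t ^ 2) * (a * t ^ 2 - b)
      + 8 * (u + 8) * a * (1 - t ^ 2) ^ 2 := by positivity
  have hT := Real.rpow_pos_of_pos ht0 (m - 2)
  refine neg_of_mul_neg_right (a := u * (u + 8) ^ 2) ?_ (by positivity)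
  rw [key]
  have := mul_pos (mul_pos (sub_pos.2 hNu) hT) hbracket
  linarith

theorem one_sub_sq_gt_of_ode {u N x : ℝ} (hu : 0 < u) (hNu : u < N) (hx1 : x < 1)
    {p p' p'' : ℝ → ℝ} (hp : ∀ t ∈ Icc x 1, HasDerivAt p (p' t) t)
    (hp' : ∀ t ∈ Icc x 1, HasDerivAt p' (p'' t) t)
    (hode : ∀ t ∈ Ioo x 1, (1 - t ^ 2) * p'' t - u * t * p' t + N * p t = 0)
    (hx : p x = 0) (hpos : ∀ t ∈ Ioo x 1, 0 < p t) :
    u * (u + 8) / (4 * N + u * (u + 4)) < 1 - x ^ 2 := by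
  have hx0 : 0 < x := by
    by_contra! hx0
    have hsub : Icc 0 1 ⊆ Icc x 1 := Icc_subset_Icc_left hx0
    have hsub' : Ioo 0 1 ⊆ Ioo x 1 := Ioo_subset_Ioo_left hx0
    have h := wronskian_neg_of_supersolution (v := fun t => -t) (v' := fun _ => -1)
      (v'' := fun _ => 0) hu (by norm_num) one_pos (fun t ht => hp t (hsub ht))
      (fun t ht => hp' t (hsub ht)) (fun t _ => hasDerivAt_neg t)
      (fun t _ => hasDerivAt_const t _) (fun t ht => hode t (hsub' ht))
      (fun t ht => by nlinarith [ht.1]) (fun t ht => hpos t (hsub' ht))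
    have hp0 : 0 ≤ p 0 := by
      rcases hx0.lt_or_eq with hlt | rfl
      · exact (hpos 0 ⟨hlt, one_pos⟩).le
      · exact hx.ge
    simp only [neg_zero, mul_zero, neg_mul, one_mul, zero_sub, neg_neg] at h
    linarith
  have hp'x : 0 ≤ p' x :=
    (hp x (left_mem_Icc.2 hx1.le)).nonneg_of_eq_zero_of_pos_right hx hx1 hpos
  have hD : 0 < 4 * N + u * (u + 4) := by nlinarith
  by_contra! hc
  set a := 4 * N + u * (u + 4) with ha
  set b := 4 * (N - u) with hb
  set m := (2 * N - 3 * u - 8) / (u + 8) with hm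
  have he : b ≤ a * x ^ 2 := by
    rw [le_div_iff₀ hD] at hc
    nlinarith
  have hv : ∀ t ∈ Icc x 1, 0 < t := fun t ht => hx0.trans_le ht.1
  have h := wronskian_neg_of_supersolution hu (by linarith) hx1 hp hp'
    (fun t ht => hasDerivAt_comparisonFn _ _ _ (hv t ht))
    (fun t ht => hasDerivAt_comparisonFn' _ _ _ (hv t ht)) hode
    (fun t ht => comparisonFn_supersolution hu hNu ha hb hm (hv t (Ioo_subset_Icc_self ht)) ht.2
      (he.trans (by gcongr; exact ht.1.le))) hpos
  have hvx : 0 ≤ comparisonFn a b m x := by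
    have h := mul_nonneg (Real.rpow_nonneg hx0.le m) (sub_nonneg.2 he)
    rw [comparisonFn, Real.rpow_add hx0, Real.rpow_two]
    linear_combination h
  rw [hx, mul_zero, sub_zero] at h
  linarith [mul_nonneg hp'x hvx]

theorem gegenbauer_largest_zero_sq_lower (n : ℕ) (hn : 2 ≤ n) (lam : ℝ)
    (hlam : -(1 / 2) < lam) (x : ℝ)
    (hx : gegenbauerP n lam x = 0) (hmax : ∀ y, gegenbauerP n lam y = 0 → y ≤ x) :
    (2 * lam + 1) * (2 * lam + 9) /
      (4 * (n : ℝ) * (n + 2 * lam) + (2 * lam + 1) * (2 * lam + 5)) < 1 - x ^ 2 := by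
  have hn' : (2 : ℝ) ≤ n := by exact_mod_cast hn
  have hpos : ∀ t, 1 ≤ t → 0 < gegenbauerP n lam t := fun t ht =>
    jacobiP_pos_of_one_le (by linarith) (by linarith) ht
  have hx1 : x < 1 := lt_of_not_ge fun h => (hpos x h).ne' hx
  have hp : Differentiable ℝ (gegenbauerP n lam) := differentiable_jacobiP _ _ _
  have hp' : Differentiable ℝ (deriv (gegenbauerP n lam)) := differentiable_deriv_jacobiP _ _ _
  have key := one_sub_sq_gt_of_ode (u := 2 * lam + 1) (N := n * (n + 2 * lam)) (by linarith)
    (by nlinarith) hx1 (fun t _ => (hp t).hasDerivAt) (fun t _ => (hp' t).hasDerivAt)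
    (fun t _ => gegenbauerP_ode n lam t) hx
    (fun t ht => pos_of_forall_zero_le hp.continuous (hpos 1 le_rfl) hmax ht.1 ht.2.le)
  convert key using 2 <;> ring
end

section
/- For every n ≥ 2 and α > −1, the smallest zero x_{1n}(α) of the Laguerre polynomial L_n^{(α)} satisfies x_{1n}(α) ≤ (α+1)(α+2)(α+4)(2n+α+1) / [ (5α+11) n(n+α+1) + (α+1)²(α+2) ]. -/
open Finset in
/-- The generalized Laguerre polynomial
`L_n^{(α)}(x) = ∑_{k=0}^n (-1)^k (α+k+1)_{n-k} / ((n-k)! k!) x^k`. -/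
noncomputable def laguerreP (n : ℕ) (α : ℝ) (x : ℝ) : ℝ :=
  ∑ k ∈ range (n + 1),
    (-1) ^ k * (ascPochhammer ℝ (n - k)).eval (α + k + 1)
      / ((n - k).factorial * k.factorial) * x ^ k

/-!
The zeros of `L_n^{(α)}` are `n` distinct positive reals. Indeed
`(t^γ e^{-t} L_k^{(γ)}(t))' = (k + 1) t^{γ-1} e^{-t} L_{k+1}^{(γ-1)}(t)`, and for `γ > 0` the
function `t^γ e^{-t} L_k^{(γ)}(t)` vanishes at `0⁺` and at `+∞`. By Rolle's theorem its derivative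
vanishes before its first positive zero, between consecutive ones and after the last, so `k`
positive zeros of `L_k^{(γ)}` give `k + 1` positive zeros of `L_{k+1}^{(γ-1)}`.

Let `r_i = 1 / x_{in}`. Vieta gives `e_m(r) = C(n, m) / (α + 1)_m`, and Newton's identities turn
this into closed forms for `S₃ = ∑ r_i³` and `S₄ = ∑ r_i⁴`. Since `x_{1n} ≤ x_{in}` for every `i`,
`x_{1n} S₄ ≤ S₃`, and `S₃ / S₄` is exactly the stated bound.
-/

open Polynomial Filter Set Topology

namespace Multiset

section CommSemiring

variable {R : Type*} [CommSemiring R]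

theorem esymm_zero (s : Multiset R) : s.esymm 0 = 1 := by
  simp [esymm, powersetCard_zero_left]

theorem esymm_cons_succ (a : R) (s : Multiset R) (k : ℕ) :
    (a ::ₘ s).esymm (k + 1) = s.esymm (k + 1) + a * s.esymm k := by
  simp only [esymm, powersetCard_cons, map_add, sum_add, map_map, Function.comp_def, prod_cons,
    sum_map_mul_left]

theorem esymm_eq_zero_of_card_lt {s : Multiset R} {k : ℕ} (h : card s < k) : s.esymm k = 0 := by
  simp [esymm, powersetCard_eq_empty _ h]

theorem esymm_card (s : Multiset R) : s.esymm (card s) = s.prod := by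
  induction s using Multiset.induction_on with
  | empty => simp [esymm_zero]
  | cons a s ih =>
    rw [card_cons, esymm_cons_succ, esymm_eq_zero_of_card_lt (Nat.lt_succ_self _), ih, prod_cons,
      zero_add]

end CommSemiring

section CommRing

variable {R : Type*} [CommRing R]

theorem sum_map_pow_three_eq_esymm (s : Multiset R) :
    (s.map (· ^ 3)).sum = s.esymm 1 ^ 3 - 3 * s.esymm 1 * s.esymm 2 + 3 * s.esymm 3 := by
  induction s using Multiset.induction_on with
  | empty => simp [esymm, powersetCard_zero_right]
  | cons a s ih =>
    simp only [map_cons, sum_cons, esymm_cons_succ, esymm_zero]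
    linear_combination ih

theorem sum_map_pow_four_eq_esymm (s : Multiset R) :
    (s.map (· ^ 4)).sum = s.esymm 1 ^ 4 - 4 * s.esymm 1 ^ 2 * s.esymm 2 + 2 * s.esymm 2 ^ 2
      + 4 * s.esymm 1 * s.esymm 3 - 4 * s.esymm 4 := by
  induction s using Multiset.induction_on with
  | empty => simp [esymm, powersetCard_zero_right]
  | cons a s ih =>
    simp only [map_cons, sum_cons, esymm_cons_succ, esymm_zero]
    linear_combination ih

end CommRing

theorem esymm_map_inv_mul_prod {K : Type*} [Field K] (s : Multiset K) (hs : (0 : K) ∉ s) {k : ℕ}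
    (hk : k ≤ card s) : (s.map (·⁻¹)).esymm k * s.prod = s.esymm (card s - k) := by
  induction s using Multiset.induction_on generalizing k with
  | empty => simp_all [esymm_zero]
  | cons a s ih =>
    have ha : a ≠ 0 := fun h => hs (h ▸ mem_cons_self a s)
    have hs' : (0 : K) ∉ s := fun h => hs (mem_cons_of_mem h)
    rw [card_cons] at hk ⊢
    rcases k with _ | k
    · rw [esymm_zero, one_mul, Nat.sub_zero, ← card_cons a s, esymm_card]
    · rw [map_cons, esymm_cons_succ, prod_cons]
      rcases Nat.lt_or_ge k (card s) with hlt | hge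
      · have e1 := ih hs' hlt
        have e0 := ih hs' hlt.le
        rw [show card s - k = card s - (k + 1) + 1 by omega] at e0
        rw [show card s + 1 - (k + 1) = card s - (k + 1) + 1 by omega, esymm_cons_succ, ← e1,
          ← e0]
        linear_combination ((map (·⁻¹) s).esymm k * s.prod) * inv_mul_cancel₀ ha
      · obtain rfl : k = card s := by omega
        have e0 := ih hs' le_rfl
        rw [Nat.sub_self, esymm_zero] at e0
        rw [esymm_eq_zero_of_card_lt (by simp), Nat.sub_self, esymm_zero]
        linear_combination (a⁻¹ * a) * e0 + inv_mul_cancel₀ ha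

end Multiset

theorem Polynomial.esymm_map_inv_roots {K : Type*} [Field K] {p : K[X]}
    (hroots : Multiset.card p.roots = p.natDegree) (h0 : p.coeff 0 ≠ 0) (m : ℕ) :
    (p.roots.map (·⁻¹)).esymm m = (-1) ^ m * p.coeff m / p.coeff 0 := by
  have hs0 : (0 : K) ∉ p.roots := fun h => h0 (by
    rw [coeff_zero_eq_eval_zero]; exact (mem_roots'.1 h).2)
  rcases le_or_gt m p.natDegree with hm | hm
  · have key := Multiset.esymm_map_inv_mul_prod _ hs0 (hroots ▸ hm)
    have hsign : ((-1 : K) ^ m) * (-1) ^ (p.natDegree - m) = (-1) ^ p.natDegree := by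
      rw [← pow_add, Nat.add_sub_cancel' hm]
    rw [hroots] at key
    rw [eq_div_iff h0, coeff_eq_esymm_roots_of_card hroots hm,
      coeff_eq_esymm_roots_of_card hroots (Nat.zero_le _), Nat.sub_zero, ← hroots,
      Multiset.esymm_card, hroots]
    linear_combination (p.leadingCoeff * (-1) ^ p.natDegree) * key
      - (p.leadingCoeff * p.roots.esymm (p.natDegree - m)) * hsign
  · rw [Multiset.esymm_eq_zero_of_card_lt (by simpa [hroots]), coeff_eq_zero_of_natDegree_lt hm]
    simp

section Rolle

variable {f f' : ℝ → ℝ} {a b : ℝ}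

-- Rolle's theorem on `(a, ∞)`, pulled back to `(0, 1)` along `u ↦ a - 1 + u⁻¹`.
theorem exists_hasDerivAt_eq_zero_Ioi {l : ℝ} (hfa : Tendsto f (𝓝[>] a) (𝓝 l))
    (hfb : Tendsto f atTop (𝓝 l)) (hff' : ∀ x ∈ Ioi a, HasDerivAt f (f' x) x) :
    ∃ c ∈ Ioi a, f' c = 0 := by
  set ψ : ℝ → ℝ := fun u => a - 1 + u⁻¹
  have hψ : ∀ u ∈ Ioo (0 : ℝ) 1, a < ψ u := fun u hu => by
    have : 1 < u⁻¹ := one_lt_inv_iff₀.2 hu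
    simp only [ψ]; linarith
  have hψ0 : Tendsto ψ (𝓝[>] 0) atTop :=
    tendsto_atTop_add_const_left _ _ tendsto_inv_nhdsGT_zero
  have hψ1 : Tendsto ψ (𝓝[<] 1) (𝓝[>] a) := by
    refine tendsto_nhdsWithin_iff.2 ⟨?_, ?_⟩
    · have : ContinuousAt ψ 1 := continuousAt_const.add (continuousAt_inv₀ one_ne_zero)
      simpa [ψ] using this.tendsto.mono_left nhdsWithin_le_nhds
    · filter_upwards [Ioo_mem_nhdsLT (zero_lt_one' ℝ)] with u hu using hψ u hu
  obtain ⟨u, hu, hu0⟩ := exists_hasDerivAt_eq_zero' zero_lt_one (hfb.comp hψ0) (hfa.comp hψ1)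
    fun u hu => (hff' _ (hψ u hu)).comp u ((hasDerivAt_inv hu.1.ne').const_add (a - 1))
  exact ⟨ψ u, hψ u hu, by simpa [hu.1.ne'] using hu0⟩

theorem exists_finset_deriv_zeros_Ioo (hab : a < b) (hfa : Tendsto f (𝓝[>] a) (𝓝 0))
    (hfb : Tendsto f (𝓝[<] b) (𝓝 0)) (hff' : ∀ x ∈ Ioo a b, HasDerivAt f (f' x) x)
    (Z : Finset ℝ) (hZ : ∀ z ∈ Z, z ∈ Ioo a b ∧ f z = 0) :
    ∃ Z' : Finset ℝ, Z'.card = Z.card + 1 ∧ ∀ z ∈ Z', z ∈ Ioo a b ∧ f' z = 0 := by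
  classical
  induction Z using Finset.induction_on_max generalizing b with
  | empty =>
    obtain ⟨c, hc, hc0⟩ := exists_hasDerivAt_eq_zero' hab hfa hfb hff'
    exact ⟨{c}, rfl, by simpa using ⟨hc, hc0⟩⟩
  | insert m Z hlt ih =>
    obtain ⟨⟨ham, hmb⟩, hm0⟩ := hZ m (Finset.mem_insert_self m Z)
    have hfm : Tendsto f (𝓝 m) (𝓝 0) := hm0 ▸ (hff' m ⟨ham, hmb⟩).continuousAt.tendsto
    obtain ⟨Z', hcard, hZ'⟩ := ih ham (hfm.mono_left nhdsWithin_le_nhds)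
      (fun x hx => hff' x ⟨hx.1, hx.2.trans hmb⟩) fun z hz =>
        ⟨⟨(hZ z (Finset.mem_insert_of_mem hz)).1.1, hlt z hz⟩,
          (hZ z (Finset.mem_insert_of_mem hz)).2⟩
    obtain ⟨c, ⟨hmc, hcb⟩, hc0⟩ := exists_hasDerivAt_eq_zero' hmb
      (hfm.mono_left nhdsWithin_le_nhds) hfb fun x hx => hff' x ⟨ham.trans hx.1, hx.2⟩
    have hcZ' : c ∉ Z' := fun hc => (hZ' c hc).1.2.not_gt hmc
    refine ⟨insert c Z', ?_, ?_⟩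
    · rw [Finset.card_insert_of_notMem hcZ',
        Finset.card_insert_of_notMem fun hm => (hlt m hm).false, hcard]
    · simp only [Finset.mem_insert, forall_eq_or_imp]
      exact ⟨⟨⟨ham.trans hmc, hcb⟩, hc0⟩,
        fun z hz => ⟨⟨(hZ' z hz).1.1, (hZ' z hz).1.2.trans hmb⟩, (hZ' z hz).2⟩⟩

theorem exists_finset_deriv_zeros_Ioi (hfa : Tendsto f (𝓝[>] a) (𝓝 0))
    (hfb : Tendsto f atTop (𝓝 0)) (hff' : ∀ x ∈ Ioi a, HasDerivAt f (f' x) x)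
    (Z : Finset ℝ) (hZ : ∀ z ∈ Z, a < z ∧ f z = 0) :
    ∃ Z' : Finset ℝ, Z'.card = Z.card + 1 ∧ ∀ z ∈ Z', a < z ∧ f' z = 0 := by
  classical
  induction Z using Finset.induction_on_max with
  | empty =>
    obtain ⟨c, hc, hc0⟩ := exists_hasDerivAt_eq_zero_Ioi hfa hfb hff'
    exact ⟨{c}, rfl, by simpa using ⟨hc, hc0⟩⟩
  | insert m Z hlt _ =>
    obtain ⟨ham, hm0⟩ := hZ m (Finset.mem_insert_self m Z)
    have hfm : Tendsto f (𝓝 m) (𝓝 0) := hm0 ▸ (hff' m ham).continuousAt.tendsto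
    obtain ⟨Z', hcard, hZ'⟩ := exists_finset_deriv_zeros_Ioo ham hfa
      (hfm.mono_left nhdsWithin_le_nhds) (fun x hx => hff' x hx.1) Z fun z hz =>
        ⟨⟨(hZ z (Finset.mem_insert_of_mem hz)).1, hlt z hz⟩,
          (hZ z (Finset.mem_insert_of_mem hz)).2⟩
    obtain ⟨c, hmc, hc0⟩ := exists_hasDerivAt_eq_zero_Ioi (hfm.mono_left nhdsWithin_le_nhds)
      hfb fun x hx => hff' x (ham.trans hx)
    have hcZ' : c ∉ Z' := fun hc => (hZ' c hc).1.2.not_gt hmc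
    refine ⟨insert c Z', ?_, ?_⟩
    · rw [Finset.card_insert_of_notMem hcZ',
        Finset.card_insert_of_notMem fun hm => (hlt m hm).false, hcard]
    · simp only [Finset.mem_insert, forall_eq_or_imp]
      exact ⟨⟨ham.trans hmc, hc0⟩, fun z hz => ⟨(hZ' z hz).1.1, (hZ' z hz).2⟩⟩

end Rolle

section Pochhammer

variable {S : Type*} [CommSemiring S]

theorem ascPochhammer_eval_add (m k : ℕ) (z : S) :
    (ascPochhammer S (m + k)).eval z
      = (ascPochhammer S m).eval z * (ascPochhammer S k).eval (z + m) := by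
  rw [← ascPochhammer_mul, eval_mul, eval_comp]
  simp

theorem ascPochhammer_succ_eval_left (m : ℕ) (z : S) :
    (ascPochhammer S (m + 1)).eval z = z * (ascPochhammer S m).eval (z + 1) := by
  simp [ascPochhammer_succ_left, eval_comp]

end Pochhammer

noncomputable def laguerrePoly (n : ℕ) (α : ℝ) : ℝ[X] :=
  ∑ k ∈ Finset.range (n + 1),
    C ((-1) ^ k * (ascPochhammer ℝ (n - k)).eval (α + k + 1)
      / ((n - k).factorial * k.factorial)) * X ^ k

section Laguerre

variable (n k : ℕ) (α γ : ℝ)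

theorem eval_laguerrePoly (x : ℝ) : (laguerrePoly n α).eval x = laguerreP n α x := by
  simp [laguerrePoly, laguerreP, eval_finsetSum]

-- Scaled by `n!`, one formula covers every `j`: it vanishes for `j > n` through `n.choose j`.
theorem factorial_mul_coeff_laguerrePoly (j : ℕ) :
    (n.factorial : ℝ) * (laguerrePoly n α).coeff j
      = (-1) ^ j * n.choose j * (ascPochhammer ℝ (n - j)).eval (α + j + 1) := by
  simp only [laguerrePoly, finsetSum_coeff, coeff_C_mul_X_pow]
  rcases le_or_gt j n with hj | hj
  · rw [Finset.sum_eq_single_of_mem j (Finset.mem_range.2 (by omega)) fun i _ hi => if_neg hi.symm,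
      if_pos rfl, Nat.cast_choose ℝ hj]
    field_simp
  · rw [Finset.sum_eq_zero fun i hi => if_neg (by simp at hi; omega), Nat.choose_eq_zero_of_lt hj]
    simp

theorem coeff_laguerrePoly_zero :
    (laguerrePoly n α).coeff 0 = (ascPochhammer ℝ n).eval (α + 1) / n.factorial := by
  rw [eq_div_iff (by positivity), mul_comm, factorial_mul_coeff_laguerrePoly]
  simp

theorem natDegree_laguerrePoly_le : (laguerrePoly n α).natDegree ≤ n := by
  refine natDegree_le_iff_coeff_eq_zero.2 fun j hj => ?_
  have h := factorial_mul_coeff_laguerrePoly n α j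
  rw [Nat.choose_eq_zero_of_lt (by exact_mod_cast hj), Nat.cast_zero, mul_zero, zero_mul] at h
  exact (mul_eq_zero.1 h).resolve_left (by positivity)

theorem C_mul_laguerrePoly_succ_sub_one :
    C ((k : ℝ) + 1) * laguerrePoly (k + 1) (γ - 1)
      = X * derivative (laguerrePoly k γ) + (C γ - X) * laguerrePoly k γ := by
  ext j
  apply mul_left_cancel₀ (Nat.cast_ne_zero.2 k.factorial_ne_zero : (k.factorial : ℝ) ≠ 0)
  rw [coeff_C_mul, ← mul_assoc, mul_comm _ ((k : ℝ) + 1), ← Nat.cast_succ, ← Nat.cast_mul,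
    ← Nat.factorial_succ, factorial_mul_coeff_laguerrePoly]
  rcases j with _ | j
  · have h0 := factorial_mul_coeff_laguerrePoly k γ 0
    simp only [coeff_add, sub_mul, coeff_sub, mul_coeff_zero, coeff_X_zero, coeff_C_zero, zero_mul,
      zero_add, sub_zero]
    simp only [pow_zero, Nat.choose_zero_right, Nat.cast_zero, Nat.cast_one, one_mul, add_zero,
      Nat.sub_zero, ascPochhammer_succ_eval_left, sub_add_cancel] at h0 ⊢
    linear_combination -γ * h0
  · rw [coeff_add, sub_mul, coeff_sub, coeff_C_mul, coeff_X_mul, coeff_X_mul, coeff_derivative]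
    have hA := factorial_mul_coeff_laguerrePoly k γ (j + 1)
    have hB := factorial_mul_coeff_laguerrePoly k γ j
    have hP : (k.choose (j + 1) : ℝ)
          * ((γ + j + 1) * (ascPochhammer ℝ (k - (j + 1))).eval (γ + (j + 1 : ℕ) + 1))
        = k.choose (j + 1) * (ascPochhammer ℝ (k - j)).eval (γ + j + 1) := by
      rcases lt_or_ge j k with h | h
      · rw [show k - j = k - (j + 1) + 1 by omega, ascPochhammer_succ_eval_left]
        push_cast; ring_nf
      · simp [Nat.choose_eq_zero_of_lt (Nat.lt_succ_of_le h)]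
    rw [Nat.choose_succ_succ', show k + 1 - (j + 1) = k - j by omega]
    push_cast at hA hB hP ⊢
    rw [show γ - 1 + (j + 1) + 1 = γ + j + 1 by ring]
    linear_combination -((j : ℝ) + 1 + γ) * hA + hB - (-1) ^ (j + 1) * hP

noncomputable def laguerreWeighted (t : ℝ) : ℝ := t ^ γ * Real.exp (-t) * laguerreP k γ t

theorem hasDerivAt_laguerreWeighted {t : ℝ} (ht : 0 < t) :
    HasDerivAt (laguerreWeighted k γ) ((k + 1) * laguerreWeighted (k + 1) (γ - 1) t) t := by
  have h := congrArg (eval t) (C_mul_laguerrePoly_succ_sub_one k γ)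
  simp only [eval_mul, eval_add, eval_sub, eval_C, eval_X, eval_laguerrePoly] at h
  have hpow : t ^ γ = t ^ (γ - 1) * t := by rw [← Real.rpow_add_one ht.ne', sub_add_cancel]
  have hexp : HasDerivAt (fun t => Real.exp (-t)) (-Real.exp (-t)) t := by
    simpa using (hasDerivAt_neg t).exp
  have hf : laguerreWeighted k γ
      = (fun s => s ^ γ) * (fun s => Real.exp (-s)) * fun s => (laguerrePoly k γ).eval s := by
    funext s
    simp [laguerreWeighted, eval_laguerrePoly]
  rw [hf]
  refine (((Real.hasDerivAt_rpow_const (Or.inl ht.ne')).mul hexp).mul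
    ((laguerrePoly k γ).hasDerivAt t)).congr_deriv ?_
  simp only [laguerreWeighted, Pi.mul_apply, eval_laguerrePoly, hpow]
  linear_combination -(t ^ (γ - 1) * Real.exp (-t)) * h

theorem tendsto_laguerreWeighted_atTop : Tendsto (laguerreWeighted k γ) atTop (𝓝 0) := by
  have hterm (j : ℕ) : Tendsto
      (fun t => (laguerrePoly k γ).coeff j * (t ^ γ * Real.exp (-t) * t ^ j)) atTop (𝓝 0) := by
    have := (tendsto_rpow_mul_exp_neg_mul_atTop_nhds_zero (γ + j) 1 one_pos).const_mul
      ((laguerrePoly k γ).coeff j)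
    rw [mul_zero] at this
    refine this.congr' ?_
    filter_upwards [eventually_gt_atTop 0] with t ht
    rw [Real.rpow_add ht, Real.rpow_natCast, neg_one_mul]
    ring
  have := tendsto_finsetSum (Finset.range ((laguerrePoly k γ).natDegree + 1)) fun j _ => hterm j
  simp only [Finset.sum_const_zero] at this
  refine this.congr fun t => ?_
  simp only [laguerreWeighted, ← eval_laguerrePoly, eval_eq_sum_range, Finset.mul_sum]
  exact Finset.sum_congr rfl fun j _ => by ring

theorem tendsto_laguerreWeighted_nhdsGT_zero (hγ : 0 < γ) :
    Tendsto (laguerreWeighted k γ) (𝓝[>] 0) (𝓝 0) := by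
  have hcont : ContinuousAt (laguerreWeighted k γ) 0 := by
    have hL : Continuous (laguerreP k γ) := by
      simpa [eval_laguerrePoly] using (laguerrePoly k γ).continuous
    exact ((Real.continuousAt_rpow_const 0 γ (Or.inr hγ.le)).mul
      (Real.continuous_exp.comp continuous_neg).continuousAt).mul hL.continuousAt
  have := hcont.tendsto.mono_left (nhdsWithin_le_nhds (s := Ioi 0))
  rwa [laguerreWeighted, Real.zero_rpow hγ.ne', zero_mul, zero_mul] at this

variable {n k α γ}

theorem coeff_laguerrePoly_zero_pos (hα : -1 < α) : 0 < (laguerrePoly n α).coeff 0 := by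
  rw [coeff_laguerrePoly_zero]
  have := ascPochhammer_pos n (α + 1) (by linarith)
  positivity

theorem exists_finset_laguerreP_zeros (hγ : -1 < γ) :
    ∃ Z : Finset ℝ, Z.card = k ∧ ∀ z ∈ Z, 0 < z ∧ laguerreP k γ z = 0 := by
  induction k generalizing γ with
  | zero => exact ⟨∅, rfl, by simp⟩
  | succ k ih =>
    obtain ⟨Z, hcard, hZ⟩ := ih (γ := γ + 1) (by linarith)
    obtain ⟨Z', hcard', hZ'⟩ := exists_finset_deriv_zeros_Ioi
      (tendsto_laguerreWeighted_nhdsGT_zero k (γ + 1) (by linarith))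
      (tendsto_laguerreWeighted_atTop k (γ + 1))
      (fun t ht => by simpa using hasDerivAt_laguerreWeighted k (γ + 1) ht) Z
      fun z hz => ⟨(hZ z hz).1, by simp [laguerreWeighted, (hZ z hz).2]⟩
    refine ⟨Z', by rw [hcard', hcard], fun z hz => ?_⟩
    obtain ⟨hzpos, hz0⟩ := hZ' z hz
    simp only [laguerreWeighted, mul_eq_zero, Real.exp_ne_zero, or_false] at hz0
    refine ⟨hzpos, ?_⟩
    rcases hz0 with h | h | h
    · exact absurd h (by positivity)
    · exact absurd h (Real.rpow_pos_of_pos hzpos γ).ne'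
    · exact h

theorem exists_roots_laguerrePoly_eq_finset (hα : -1 < α) :
    ∃ Z : Finset ℝ, Z.card = n ∧ (∀ z ∈ Z, 0 < z) ∧ (laguerrePoly n α).roots = Z.val := by
  obtain ⟨Z, hcard, hZ⟩ := exists_finset_laguerreP_zeros (k := n) hα
  have hne : laguerrePoly n α ≠ 0 := fun h => by
    simpa [h] using (coeff_laguerrePoly_zero_pos (n := n) hα).ne'
  have hle : Z.val ≤ (laguerrePoly n α).roots := (Multiset.le_iff_subset Z.nodup).2
    fun z hz => (mem_roots hne).2 (by rw [IsRoot, eval_laguerrePoly]; exact (hZ z hz).2)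
  refine ⟨Z, hcard, fun z hz => (hZ z hz).1, (Multiset.eq_of_le_of_card_le hle ?_).symm⟩
  calc Multiset.card (laguerrePoly n α).roots ≤ (laguerrePoly n α).natDegree := card_roots' _
    _ ≤ n := natDegree_laguerrePoly_le n α
    _ = Multiset.card Z.val := hcard.symm

end Laguerre

section LaguerreRoots

variable {n : ℕ} {α : ℝ}

theorem card_roots_laguerrePoly (hα : -1 < α) : Multiset.card (laguerrePoly n α).roots = n := by
  obtain ⟨Z, hcard, -, hroots⟩ := exists_roots_laguerrePoly_eq_finset (n := n) hα
  rw [hroots, Finset.card_val, hcard]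

theorem pos_of_mem_roots_laguerrePoly (hα : -1 < α) : ∀ t ∈ (laguerrePoly n α).roots, 0 < t := by
  obtain ⟨Z, -, hpos, hroots⟩ := exists_roots_laguerrePoly_eq_finset (n := n) hα
  rwa [hroots]

theorem esymm_inv_roots_laguerrePoly (hα : -1 < α) (m : ℕ) :
    ((laguerrePoly n α).roots.map (·⁻¹)).esymm m
      = n.choose m / (ascPochhammer ℝ m).eval (α + 1) := by
  have hcard := card_roots_laguerrePoly (n := n) hα
  have hdeg : (laguerrePoly n α).natDegree = n :=
    (natDegree_laguerrePoly_le n α).antisymm (hcard.symm.le.trans (card_roots' _))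
  have hm := factorial_mul_coeff_laguerrePoly n α m
  have h0 := factorial_mul_coeff_laguerrePoly n α 0
  simp only [pow_zero, Nat.choose_zero_right, Nat.cast_one, one_mul, Nat.sub_zero, Nat.cast_zero,
    add_zero] at h0
  have hsplit : (n.choose m : ℝ) * (ascPochhammer ℝ n).eval (α + 1)
      = n.choose m
        * ((ascPochhammer ℝ m).eval (α + 1) * (ascPochhammer ℝ (n - m)).eval (α + m + 1)) := by
    rcases le_or_gt m n with h | h
    · rw [add_right_comm, ← ascPochhammer_eval_add, Nat.add_sub_cancel' h]
    · simp [Nat.choose_eq_zero_of_lt h]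
  have hsq : ((-1 : ℝ) ^ m) * (-1) ^ m = 1 := by rw [← mul_pow]; norm_num
  have hc0 := (coeff_laguerrePoly_zero_pos (n := n) hα).ne'
  rw [Polynomial.esymm_map_inv_roots (hcard.trans hdeg.symm) hc0,
    div_eq_div_iff hc0 (ascPochhammer_pos m _ (by linarith)).ne']
  refine mul_left_cancel₀ (Nat.cast_ne_zero.2 n.factorial_ne_zero : (n.factorial : ℝ) ≠ 0) ?_
  linear_combination ((-1) ^ m * (ascPochhammer ℝ m).eval (α + 1)) * hm - (n.choose m : ℝ) * h0
    + ((n.choose m : ℝ) * (ascPochhammer ℝ m).eval (α + 1)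
      * (ascPochhammer ℝ (n - m)).eval (α + m + 1)) * hsq - hsplit

end LaguerreRoots

theorem sum_pow_three_mul_eq_sum_pow_four_mul {n : ℕ} {α : ℝ} (hα : -1 < α) {r : Multiset ℝ}
    (hr : ∀ m, r.esymm m = n.choose m / (ascPochhammer ℝ m).eval (α + 1)) :
    (r.map (· ^ 3)).sum * ((5 * α + 11) * n * (n + α + 1) + (α + 1) ^ 2 * (α + 2))
      = (α + 1) * (α + 2) * (α + 4) * (2 * n + α + 1) * (r.map (· ^ 4)).sum := by
  have h1 : (0 : ℝ) < α + 1 := by linarith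
  have h2 : (0 : ℝ) < α + 2 := by linarith
  have h3 : (0 : ℝ) < α + 3 := by linarith
  have h4 : (0 : ℝ) < α + 4 := by linarith
  rw [Multiset.sum_map_pow_three_eq_esymm, Multiset.sum_map_pow_four_eq_esymm, hr 1, hr 2, hr 3,
    hr 4]
  simp only [Nat.cast_choose_eq_descPochhammer_div, descPochhammer_succ_eval,
    ascPochhammer_succ_eval, descPochhammer_zero, ascPochhammer_zero, eval_one, Nat.factorial]
  push_cast
  field_simp
  ring

theorem mul_sum_inv_pow_four_le {s : Multiset ℝ} {x : ℝ} (hs : ∀ t ∈ s, 0 < t)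
    (hx : ∀ t ∈ s, x ≤ t) :
    x * ((s.map (·⁻¹)).map (· ^ 4)).sum ≤ ((s.map (·⁻¹)).map (· ^ 3)).sum := by
  rw [Multiset.map_map, Multiset.map_map, ← Multiset.sum_map_mul_left]
  refine Multiset.sum_map_le_sum_map _ _ fun t ht => ?_
  have ht0 := hs t ht
  have hxt : x * t⁻¹ ≤ 1 := by rw [← div_eq_mul_inv]; exact div_le_one_of_le₀ (hx t ht) ht0.le
  calc x * t⁻¹ ^ 4 = x * t⁻¹ * t⁻¹ ^ 3 := by ring
    _ ≤ t⁻¹ ^ 3 := mul_le_of_le_one_left (by positivity) hxt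

theorem laguerre_smallest_zero_upper_general (n : ℕ) (hn : 2 ≤ n) (α : ℝ) (hα : -1 < α)
    (x : ℝ) (hmin : ∀ y, laguerreP n α y = 0 → x ≤ y) :
    x ≤ (α + 1) * (α + 2) * (α + 4) * (2 * n + α + 1) /
      ((5 * α + 11) * n * (n + α + 1) + (α + 1) ^ 2 * (α + 2)) := by
  set r := (laguerrePoly n α).roots.map (·⁻¹)
  have hpos := pos_of_mem_roots_laguerrePoly (n := n) hα
  have hx : ∀ t ∈ (laguerrePoly n α).roots, x ≤ t := fun t ht =>
    hmin t (by rw [← eval_laguerrePoly]; exact (mem_roots'.1 ht).2)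
  have hS4 : 0 < (r.map (· ^ 4)).sum := by
    have hne : (laguerrePoly n α).roots ≠ ∅ := by
      rw [Multiset.empty_eq_zero, ← Multiset.card_pos, card_roots_laguerrePoly hα]; omega
    simpa [r, Multiset.map_map] using Multiset.sum_lt_sum_of_nonempty (f := fun _ => (0 : ℝ))
      (g := fun t => (t ^ 4)⁻¹) hne fun t ht => by have := hpos t ht; positivity
  have hD : 0 < (5 * α + 11) * n * (n + α + 1) + (α + 1) ^ 2 * (α + 2) := by
    have : (2 : ℝ) ≤ n := by exact_mod_cast hn
    exact add_pos (mul_pos (mul_pos (by linarith) (by linarith)) (by linarith))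
      (mul_pos (pow_pos (by linarith) 2) (by linarith))
  have key := sum_pow_three_mul_eq_sum_pow_four_mul hα (esymm_inv_roots_laguerrePoly (n := n) hα)
  rw [le_div_iff₀ hD]
  refine le_of_mul_le_mul_right ?_ hS4
  calc x * _ * (r.map (· ^ 4)).sum = x * (r.map (· ^ 4)).sum * _ := by ring
    _ ≤ (r.map (· ^ 3)).sum * _ :=
      mul_le_mul_of_nonneg_right (mul_sum_inv_pow_four_le hpos hx) hD.le
    _ = _ := key

theorem laguerre_smallest_zero_upper (n : ℕ) (hn : 2 ≤ n) (α : ℝ) (hα : -1 < α)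
    (x : ℝ) (hx : laguerreP n α x = 0) (hmin : ∀ y, laguerreP n α y = 0 → x ≤ y) :
    x ≤ (α + 1) * (α + 2) * (α + 4) * (2 * n + α + 1) /
      ((5 * α + 11) * n * (n + α + 1) + (α + 1) ^ 2 * (α + 2)) :=
  laguerre_smallest_zero_upper_general n hn α hα x hmin
end
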